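/- arXiv:2604.27107 — 3 statements merged into one kernel-verified Lean document; each statement's English description precedes it below -/
import Mathlib

section
/- Let u ∈ S_n and let D be a pipe dream for u. Let i be maximal such that there exists j with (i,j) ∉ D and (i,j+1) ∈ D; let j be maximal with (i,j) ∉ D and (i,j+1) ∈ D; and let k > j be minimal such that (i,k+1) ∉ D. Then one can perform the inverse ladder moves L^{-1}_{i,j+1}, L^{-1}_{i,j+2}, …, L^{-1}_{i,k} in this order: each successive move is a valid inverse ladder move on the pipe dream produced by the previous ones, and each intermediate result is a pipe dream for u. -/
/-!
Reading a pipe dream row by row, each row from right to left, writes its permutation as a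
product of simple transpositions `s_{r+c}`, one for each cross `(r, c)`. Call a ladder of
height `s` at column `c` below row `i` a configuration in which the cells `(i, c), (i, c + 1),
(i + s, c), (i + s, c + 1)` are free and every row in between is crossed at both columns. Each
such row sends `r + c + 1, r + c + 2` to `r + c, r + c + 1`, so the letters read between the
top right and the bottom left corner of the ladder form a permutation `Q` with
`Q (i + s + c) = i + c + 1` and `Q (i + s + c + 1) = i + c + 2`, hence
`s_{i+c+1} Q = Q s_{i+s+c}`. Consequently a cross may be moved between the two corners without
changing the permutation (ladder moves), and a reduced pipe dream never has crosses at both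
corners: removing both would give the same permutation with fewer crosses than its
length.

Since `i` is the lowest row containing a free cell followed by a cross, every row below `i` is
left-justified. Take the cross at `(i, c + 1)` with `(i, c)` free and let `i + m` be the first
row below `i` that is free at both columns `c` and `c + 1`. Left-justification makes the rows
in between crossed at column `c`, and then reducedness makes them crossed at column `c + 1`
as well, so they form a ladder and the inverse ladder move is valid. Afterwards `(i, c + 1)` is
free, the crosses at `(i, c + 2), …, (i, k)` remain, and the rows below `i` are unchanged from
column `c + 1` on, so the next move can be performed in the same way.
-/

open scoped Classical

/-- The Lehmer code of a permutation of `ℕ` (0-indexed):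
`lehmerCode w i = #{j | j > i ∧ w j < w i}`. -/
noncomputable def lehmerCode (w : Equiv.Perm ℕ) (i : ℕ) : ℕ :=
  Set.ncard {j | i < j ∧ w j < w i}

/-- The number of inversions of a permutation of `ℕ`. -/
noncomputable def inversions (w : Equiv.Perm ℕ) : ℕ :=
  Set.ncard {p : ℕ × ℕ | p.1 < p.2 ∧ w p.2 < w p.1}

/-- The word of a pipe-dream candidate `D ⊆ Δ_n` (0-indexed positions): read the rows
top to bottom and each row from right to left; a cross at `(i, j)` contributes the
letter `i + j` (this is the letter `i + j - 1` in 1-indexed conventions). -/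
def pdWord (n : ℕ) (D : Finset (ℕ × ℕ)) : List ℕ :=
  ((List.range n).map fun i =>
    (((List.range n).reverse.filter fun j => decide ((i, j) ∈ D)).map
      fun j => i + j)).flatten

/-- The permutation traced out by the pipes of `D`: the product of the simple
transpositions given by the word of `D`. -/
def pdPerm (n : ℕ) (D : Finset (ℕ × ℕ)) : Equiv.Perm ℕ :=
  ((pdWord n D).map fun k => Equiv.swap k (k + 1)).prod

/-- `D` is a (reduced) pipe dream for `u` inside the staircase
`Δ_n = {(i,j) : i + j + 1 ≤ n}` (0-indexed): the pipes trace out the permutation `u`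
(the pipe entering the top of column `j` exits the left edge in row `i` with `u i = j`),
and no two pipes cross more than once, i.e. `#D = ℓ(u)`. -/
def IsPipeDream (n : ℕ) (u : Equiv.Perm ℕ) (D : Finset (ℕ × ℕ)) : Prop :=
  (∀ p ∈ D, p.1 + p.2 + 1 ≤ n) ∧ pdPerm n D = u ∧ D.card = inversions u

/-- The weight of a pipe dream: `wt D i` is the number of crosses in (0-indexed) row `i`. -/
def wt (D : Finset (ℕ × ℕ)) (i : ℕ) : ℕ := (D.filter fun p => p.1 = i).card
/-- `D'` is obtained from `D` by the ladder move `L_{i,j}` (with parameter `m`),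
which moves the cross at `(i, j)` to `(i - m, j + 1)`: here (0-indexed) `0 < m ≤ i`,
`(i,j) ∈ D`, `(i,j+1) ∉ D`, `(i-m,j), (i-m,j+1) ∉ D`, and `(i-k,j), (i-k,j+1) ∈ D`
for all `1 ≤ k < m`. -/
def IsLadderMove (D D' : Finset (ℕ × ℕ)) (i j m : ℕ) : Prop :=
  0 < m ∧ m ≤ i ∧ (i, j) ∈ D ∧ (i, j + 1) ∉ D ∧
  (i - m, j) ∉ D ∧ (i - m, j + 1) ∉ D ∧
  (∀ k, 1 ≤ k → k < m → ((i - k, j) ∈ D ∧ (i - k, j + 1) ∈ D)) ∧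
  D' = insert (i - m, j + 1) (D.erase (i, j))

/-- `E'` is obtained from `E` by the inverse ladder move `L⁻¹_{r,c}`, moving the cross
at `(r, c)` down to column `c - 1`: i.e. some ladder move `L_{i,c-1}` with `i - m = r`
takes `E'` back to `E`. -/
def IsInvLadderMove (E E' : Finset (ℕ × ℕ)) (r c : ℕ) : Prop :=
  ∃ i m, r = i - m ∧ IsLadderMove E' E i (c - 1) m

def wordPerm (w : List ℕ) : Equiv.Perm ℕ :=
  (w.map fun k => Equiv.swap k (k + 1)).prod

@[simp] lemma wordPerm_nil : wordPerm [] = 1 := rfl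

@[simp] lemma wordPerm_cons (d : ℕ) (w : List ℕ) :
    wordPerm (d :: w) = Equiv.swap d (d + 1) * wordPerm w := by
  simp [wordPerm]

@[simp] lemma wordPerm_append (w₁ w₂ : List ℕ) :
    wordPerm (w₁ ++ w₂) = wordPerm w₁ * wordPerm w₂ := by
  simp [wordPerm]

lemma wordPerm_apply_of_forall_ne {w : List ℕ} {x : ℕ} (h : ∀ d ∈ w, d ≠ x ∧ d + 1 ≠ x) :
    wordPerm w x = x := by
  induction w with
  | nil => rfl
  | cons d w ih =>
    simp only [List.forall_mem_cons] at h
    rw [wordPerm_cons, Equiv.Perm.mul_apply, ih h.2,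
      Equiv.swap_apply_of_ne_of_ne h.1.1.symm h.1.2.symm]

lemma swap_mul_wordPerm {m : List ℕ} {a b : ℕ} (ha : wordPerm m b = a)
    (ha' : wordPerm m (b + 1) = a + 1) :
    Equiv.swap a (a + 1) * wordPerm m = wordPerm m * Equiv.swap b (b + 1) := by
  rw [Equiv.mul_swap_eq_swap_mul, ha, ha']

def inversionSet (σ : Equiv.Perm ℕ) : Set (ℕ × ℕ) := {p | p.1 < p.2 ∧ σ p.2 < σ p.1}

lemma inversionSet_swap_mul_subset (σ : Equiv.Perm ℕ) (d : ℕ) :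
    inversionSet (Equiv.swap d (d + 1) * σ) ⊆ insert (σ⁻¹ d, σ⁻¹ (d + 1)) (inversionSet σ) := by
  rintro ⟨p, q⟩ ⟨hpq, hinv⟩
  simp only [Equiv.Perm.mul_apply] at hinv
  by_cases hσ : σ q < σ p
  · exact Or.inr ⟨hpq, hσ⟩
  have hσ' : σ p < σ q := lt_of_le_of_ne (not_lt.1 hσ) (σ.injective.ne hpq.ne)
  left
  simp only [Equiv.swap_apply_def] at hinv
  have hp : σ p = d := by split_ifs at hinv <;> omega
  have hq : σ q = d + 1 := by split_ifs at hinv <;> omega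
  subst hp
  rw [← hq]
  simp

lemma encard_inversionSet_wordPerm_le (w : List ℕ) :
    (inversionSet (wordPerm w)).encard ≤ w.length := by
  induction w with
  | nil =>
    simpa [inversionSet, Set.eq_empty_iff_forall_notMem] using fun (a b : ℕ) (h : a < b) => h.le
  | cons d w ih =>
    calc (inversionSet (wordPerm (d :: w))).encard
        ≤ (insert _ (inversionSet (wordPerm w))).encard :=
          Set.encard_le_encard (inversionSet_swap_mul_subset _ d)
      _ ≤ (inversionSet (wordPerm w)).encard + 1 := Set.encard_insert_le _ _
      _ ≤ (d :: w).length := by simpa using add_le_add_right ih 1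

lemma inversions_wordPerm_le (w : List ℕ) : inversions (wordPerm w) ≤ w.length := by
  have h := encard_inversionSet_wordPerm_le w
  rw [← (Set.finite_of_encard_le_coe h).cast_ncard_eq] at h
  exact_mod_cast h

def rowWord (r : ℕ) (D : Finset (ℕ × ℕ)) (cols : List ℕ) : List ℕ :=
  (cols.filter fun j => decide ((r, j) ∈ D)).map fun j => r + j

lemma pdWord_eq_flatten_rowWord (n : ℕ) (D : Finset (ℕ × ℕ)) :
    pdWord n D = ((List.range n).map fun r => rowWord r D (List.range n).reverse).flatten :=
  rfl

section rowWord

variable {r : ℕ} {D D' : Finset (ℕ × ℕ)}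

@[simp] lemma rowWord_append (cols₁ cols₂ : List ℕ) :
    rowWord r D (cols₁ ++ cols₂) = rowWord r D cols₁ ++ rowWord r D cols₂ := by
  simp [rowWord]

lemma rowWord_cons (j : ℕ) (cols : List ℕ) :
    rowWord r D (j :: cols) = (if (r, j) ∈ D then [r + j] else []) ++ rowWord r D cols := by
  by_cases h : (r, j) ∈ D <;> simp [rowWord, h]

lemma exists_of_mem_rowWord {cols : List ℕ} {d : ℕ} (h : d ∈ rowWord r D cols) :
    ∃ j ∈ cols, d = r + j := by
  obtain ⟨j, hj, rfl⟩ := List.mem_map.1 h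
  exact ⟨j, (List.mem_filter.1 hj).1, rfl⟩

lemma rowWord_congr {cols : List ℕ} (h : ∀ j ∈ cols, ((r, j) ∈ D ↔ (r, j) ∈ D')) :
    rowWord r D cols = rowWord r D' cols := by
  rw [rowWord, rowWord, List.filter_congr fun j hj => decide_eq_decide.2 (h j hj)]

lemma wordPerm_rowWord_high_apply (n c : ℕ) {x : ℕ} (hx : x ≤ r + c + 1) :
    wordPerm (rowWord r D (List.range' (c + 2) (n - (c + 2))).reverse) x = x := by
  refine wordPerm_apply_of_forall_ne fun d hd => ?_
  obtain ⟨j, hj, rfl⟩ := exists_of_mem_rowWord hd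
  have := List.mem_range'_1.1 (List.mem_reverse.1 hj)
  omega

lemma wordPerm_rowWord_low_apply (c : ℕ) {x : ℕ} (hx : r + c + 1 ≤ x) :
    wordPerm (rowWord r D (List.range c).reverse) x = x := by
  refine wordPerm_apply_of_forall_ne fun d hd => ?_
  obtain ⟨j, hj, rfl⟩ := exists_of_mem_rowWord hd
  have := List.mem_range.1 (List.mem_reverse.1 hj)
  omega

lemma reverse_range_eq {n c : ℕ} (hc : c + 2 ≤ n) :
    (List.range n).reverse =
      (List.range' (c + 2) (n - (c + 2))).reverse ++ (c + 1) :: c :: (List.range c).reverse := by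
  obtain ⟨l, rfl⟩ := Nat.exists_eq_add_of_le hc
  simp [List.range_add, List.range'_eq_map_range, List.range_succ]

lemma rowWord_eq_high_append_low {n c : ℕ} (hc : c + 2 ≤ n) :
    rowWord r D (List.range n).reverse =
      rowWord r D (List.range' (c + 2) (n - (c + 2))).reverse ++
        (if (r, c + 1) ∈ D then [r + c + 1] else []) ++ (if (r, c) ∈ D then [r + c] else []) ++
        rowWord r D (List.range c).reverse := by
  simp [reverse_range_eq hc, rowWord_cons, add_assoc]

lemma wordPerm_rowWord_apply_of_mem {n c : ℕ} (hc : c + 2 ≤ n) (h₀ : (r, c) ∈ D)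
    (h₁ : (r, c + 1) ∈ D) :
    wordPerm (rowWord r D (List.range n).reverse) (r + c + 1) = r + c ∧
      wordPerm (rowWord r D (List.range n).reverse) (r + c + 2) = r + c + 1 := by
  simp only [rowWord_eq_high_append_low hc, h₀, h₁, if_true, wordPerm_append, wordPerm_cons,
    wordPerm_nil, mul_one, Equiv.Perm.mul_apply]
  rw [wordPerm_rowWord_low_apply c le_rfl, wordPerm_rowWord_low_apply c (by omega)]
  constructor
  · rw [Equiv.swap_apply_right, Equiv.swap_apply_of_ne_of_ne (by omega) (by omega),
      wordPerm_rowWord_high_apply n c (by omega)]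
  · rw [Equiv.swap_apply_of_ne_of_ne (x := r + c + 2) (by omega) (by omega),
      show r + c + 2 = r + c + 1 + 1 by rfl, Equiv.swap_apply_right,
      wordPerm_rowWord_high_apply n c le_rfl]

end rowWord

lemma wordPerm_flatten_rowWord_apply {n a c : ℕ} {F : Finset (ℕ × ℕ)} (hc : c + 2 ≤ n) :
    ∀ d, (∀ q < d, (a + q, c) ∈ F ∧ (a + q, c + 1) ∈ F) →
      wordPerm (((List.range' a d).map fun r => rowWord r F (List.range n).reverse).flatten)
          (a + d + c) = a + c ∧
        wordPerm (((List.range' a d).map fun r => rowWord r F (List.range n).reverse).flatten)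
          (a + d + c + 1) = a + c + 1
  | 0, _ => by simp
  | d + 1, hfull => by
    obtain ⟨ih₀, ih₁⟩ := wordPerm_flatten_rowWord_apply hc d fun q hq => hfull q (by omega)
    obtain ⟨h₀, h₁⟩ := hfull d (by omega)
    obtain ⟨hrow₀, hrow₁⟩ := wordPerm_rowWord_apply_of_mem hc h₀ h₁
    simp only [List.range'_concat, List.map_append, List.flatten_append, wordPerm_append,
      List.map_singleton, List.flatten_singleton, Equiv.Perm.mul_apply, one_mul]
    refine ⟨?_, ?_⟩
    · rw [show a + (d + 1) + c = a + d + c + 1 by omega, hrow₀, ih₀]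
    · rw [show a + (d + 1) + c + 1 = a + d + c + 2 by omega, hrow₁, ih₁]

lemma length_rowWord (r : ℕ) (D : Finset (ℕ × ℕ)) (n : ℕ) :
    (rowWord r D (List.range n).reverse).length =
      ((Finset.range n).filter fun j => (r, j) ∈ D).card := by
  rw [rowWord, List.length_map, List.filter_reverse, List.length_reverse]
  rfl

lemma length_pdWord_le_card (n : ℕ) (F : Finset (ℕ × ℕ)) : (pdWord n F).length ≤ F.card :=
  calc (pdWord n F).length
      = ∑ r ∈ Finset.range n, ((Finset.range n).filter fun j => (r, j) ∈ F).card := by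
        rw [pdWord_eq_flatten_rowWord, List.length_flatten, List.map_map,
          ← List.sum_toFinset _ List.nodup_range, List.toFinset_range]
        exact Finset.sum_congr rfl fun r _ => length_rowWord r F n
    _ = ((Finset.range n ×ˢ Finset.range n).filter (· ∈ F)).card := by
        rw [Finset.card_filter, Finset.sum_product]
        exact Finset.sum_congr rfl fun r _ => Finset.card_filter _ _
    _ ≤ F.card := Finset.card_le_card fun p hp => (Finset.mem_filter.1 hp).2

lemma inversions_pdPerm_le_card (n : ℕ) (F : Finset (ℕ × ℕ)) :
    inversions (pdPerm n F) ≤ F.card :=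
  (inversions_wordPerm_le _).trans (length_pdWord_le_card n F)

lemma range_eq_append_cons_append_cons {n i s : ℕ} (hs : 0 < s) (hn : i + s < n) :
    List.range n = List.range i ++ i :: List.range' (i + 1) (s - 1) ++
      (i + s) :: List.range' (i + s + 1) (n - (i + s + 1)) := by
  obtain ⟨t, rfl⟩ : ∃ t, s = t + 1 := ⟨s - 1, by omega⟩
  obtain ⟨l, rfl⟩ : ∃ l, n = i + (t + 1) + 1 + l := ⟨n - (i + (t + 1) + 1), by omega⟩
  rw [add_tsub_cancel_left, Nat.add_sub_cancel, List.range_eq_range', List.range_eq_range',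
    show i + (t + 1) + 1 + l = i + (1 + t + (1 + l)) by omega]
  simp only [← List.range'_append_1]
  simp [add_assoc, add_comm 1]

/-- `m` is the part of the reading word of `F` strictly between the cells `(i, c + 1)` and
`(i + s, c)`. -/
lemma exists_pdWord_eq_append {n i s c : ℕ} {F : Finset (ℕ × ℕ)} (hs : 0 < s) (hc : c + 2 ≤ n)
    (hn : i + s < n) (h₀ : (i, c) ∉ F) (h₃ : (i + s, c + 1) ∉ F)
    (hfull : ∀ q, 0 < q → q < s → (i + q, c) ∈ F ∧ (i + q, c + 1) ∈ F) :
    ∃ w₁ m w₂ : List ℕ, wordPerm m (i + s + c) = i + c + 1 ∧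
      wordPerm m (i + s + c + 1) = i + c + 2 ∧
      ∀ G : Finset (ℕ × ℕ), (∀ p, p ≠ (i, c + 1) → p ≠ (i + s, c) → (p ∈ G ↔ p ∈ F)) →
        pdWord n G = w₁ ++ (if (i, c + 1) ∈ G then [i + c + 1] else []) ++ m ++
          (if (i + s, c) ∈ G then [i + s + c] else []) ++ w₂ := by
  set R : ℕ → List ℕ := fun r => rowWord r F (List.range n).reverse
  obtain ⟨hmid₀, hmid₁⟩ := wordPerm_flatten_rowWord_apply (a := i + 1) hc (s - 1)
    fun q hq => by rw [add_right_comm]; exact hfull (q + 1) (by omega) (by omega)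
  rw [show i + 1 + (s - 1) + c = i + s + c by omega] at hmid₀ hmid₁
  refine ⟨((List.range i).map R).flatten ++
      rowWord i F (List.range' (c + 2) (n - (c + 2))).reverse,
    rowWord i F (List.range c).reverse ++ ((List.range' (i + 1) (s - 1)).map R).flatten ++
      rowWord (i + s) F (List.range' (c + 2) (n - (c + 2))).reverse,
    rowWord (i + s) F (List.range c).reverse ++
      ((List.range' (i + s + 1) (n - (i + s + 1))).map R).flatten,
    ?_, ?_, ?_⟩
  · simp only [wordPerm_append, Equiv.Perm.mul_apply]
    rw [wordPerm_rowWord_high_apply n c (by omega), hmid₀,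
      wordPerm_rowWord_low_apply c (by omega)]
    ring
  · simp only [wordPerm_append, Equiv.Perm.mul_apply]
    rw [wordPerm_rowWord_high_apply n c le_rfl, hmid₁,
      wordPerm_rowWord_low_apply c (by omega)]
    ring
  intro G hG
  have hhigh : ∀ r, rowWord r G (List.range' (c + 2) (n - (c + 2))).reverse =
      rowWord r F (List.range' (c + 2) (n - (c + 2))).reverse := fun r =>
    rowWord_congr fun j hj => by
      have := List.mem_range'_1.1 (List.mem_reverse.1 hj)
      exact hG _ (by rw [Ne, Prod.mk.injEq]; omega) (by rw [Ne, Prod.mk.injEq]; omega)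
  have hlow : ∀ r, rowWord r G (List.range c).reverse = rowWord r F (List.range c).reverse :=
    fun r => rowWord_congr fun j hj => by
      have := List.mem_range.1 (List.mem_reverse.1 hj)
      exact hG _ (by rw [Ne, Prod.mk.injEq]; omega) (by rw [Ne, Prod.mk.injEq]; omega)
  have hG₀ : (i, c) ∉ G := by rwa [hG _ (by simp) (by rw [Ne, Prod.mk.injEq]; omega)]
  have hG₃ : (i + s, c + 1) ∉ G := by rwa [hG _ (by rw [Ne, Prod.mk.injEq]; omega) (by simp)]
  have hrows : ∀ rows : List ℕ, (∀ r ∈ rows, r ≠ i ∧ r ≠ i + s) →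
      (rows.map fun r => rowWord r G (List.range n).reverse) = rows.map R :=
    fun rows h => List.map_congr_left fun r hr =>
      rowWord_congr fun j _ => hG _ (by simp [(h r hr).1]) (by simp [(h r hr).2])
  rw [pdWord_eq_flatten_rowWord]
  nth_rw 2 [range_eq_append_cons_append_cons hs hn]
  simp only [List.map_append, List.map_cons, List.flatten_append, List.flatten_cons]
  rw [hrows _ fun r hr => by rw [List.mem_range] at hr; omega,
    hrows _ fun r hr => by rw [List.mem_range'_1] at hr; omega,
    hrows _ fun r hr => by rw [List.mem_range'_1] at hr; omega, rowWord_eq_high_append_low hc,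
    rowWord_eq_high_append_low hc]
  simp only [hhigh, hlow, hG₀, hG₃, if_false, List.append_nil, List.append_assoc]

structure IsLadder (F : Finset (ℕ × ℕ)) (i s c : ℕ) : Prop where
  pos : 0 < s
  top_left : (i, c) ∉ F
  top_right : (i, c + 1) ∉ F
  bot_left : (i + s, c) ∉ F
  bot_right : (i + s, c + 1) ∉ F
  between : ∀ q, 0 < q → q < s → (i + q, c) ∈ F ∧ (i + q, c + 1) ∈ F

namespace IsLadder

variable {n i s c : ℕ} {F : Finset (ℕ × ℕ)}

lemma bottom_ne_top (hF : IsLadder F i s c) : (i + s, c) ≠ (i, c + 1) := by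
  have := hF.pos
  simp only [ne_eq, Prod.mk.injEq, not_and]
  omega

lemma pdPerm_insert_top_eq (hF : IsLadder F i s c) (hc : c + 2 ≤ n) (hn : i + s < n) :
    pdPerm n (insert (i, c + 1) F) = pdPerm n (insert (i + s, c) F) := by
  obtain ⟨w₁, m, w₂, hm₀, hm₁, hword⟩ :=
    exists_pdWord_eq_append hF.pos hc hn hF.top_left hF.bot_right hF.between
  show wordPerm (pdWord n _) = wordPerm (pdWord n _)
  rw [hword _ fun p hp _ => by simp [hp], hword _ fun p _ hp => by simp [hp]]
  simp only [Finset.mem_insert_self, if_true, Finset.mem_insert, hF.bottom_ne_top,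
    hF.bottom_ne_top.symm, hF.top_right, hF.bot_left, or_self, if_false, List.append_nil,
    wordPerm_append, wordPerm_cons, wordPerm_nil, mul_one, mul_assoc]
  rw [← mul_assoc _ (wordPerm m), swap_mul_wordPerm hm₀ hm₁, mul_assoc]

lemma pdPerm_insert_insert (hF : IsLadder F i s c) (hc : c + 2 ≤ n) (hn : i + s < n) :
    pdPerm n (insert (i, c + 1) (insert (i + s, c) F)) = pdPerm n F := by
  obtain ⟨w₁, m, w₂, hm₀, hm₁, hword⟩ :=
    exists_pdWord_eq_append hF.pos hc hn hF.top_left hF.bot_right hF.between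
  show wordPerm (pdWord n _) = wordPerm (pdWord n _)
  rw [hword _ fun p hp hp' => by simp [hp, hp'], hword _ fun p _ _ => Iff.rfl]
  simp only [Finset.mem_insert_self, if_true, Finset.mem_insert, hF.bottom_ne_top, hF.top_right,
    hF.bot_left, or_true, if_false, List.append_nil, wordPerm_append, wordPerm_cons,
    wordPerm_nil, mul_one, mul_assoc]
  rw [← mul_assoc _ (wordPerm m), swap_mul_wordPerm hm₀ hm₁, mul_assoc, Equiv.swap_mul_self_mul]

end IsLadder

namespace IsPipeDream

variable {n : ℕ} {u : Equiv.Perm ℕ} {E : Finset (ℕ × ℕ)} {i s c : ℕ}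

lemma lt_of_mem (hE : IsPipeDream n u E) {r x : ℕ} (h : (r, x) ∈ E) : r + x < n := hE.1 _ h

lemma not_crossed_twice (hE : IsPipeDream n u E) (hs : 0 < s) (h₀ : (i, c) ∉ E)
    (h₁ : (i, c + 1) ∈ E) (h₂ : (i + s, c) ∈ E) (h₃ : (i + s, c + 1) ∉ E)
    (hfull : ∀ q, 0 < q → q < s → (i + q, c) ∈ E ∧ (i + q, c + 1) ∈ E) : False := by
  set F := (E.erase (i, c + 1)).erase (i + s, c)
  have hne : (i + s, c) ≠ (i, c + 1) := by rw [Ne, Prod.mk.injEq]; omega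
  have hF : IsLadder F i s c := by
    refine ⟨hs, ?_, ?_, ?_, ?_, fun q hq hqs => ?_⟩
    · simp [F, h₀]
    · simp [F, hne.symm]
    · simp [F]
    · simp [F, h₃]
    · have hq' : (i + q, c) ≠ (i + s, c) ∧ (i + q, c + 1) ≠ (i, c + 1) ∧
          (i + q, c) ≠ (i, c + 1) ∧ (i + q, c + 1) ≠ (i + s, c) := by
        simp only [ne_eq, Prod.mk.injEq]; omega
      simp [F, hq', hfull q hq hqs]
  have hperm : pdPerm n F = u := by
    rw [← hF.pdPerm_insert_insert (by have := hE.lt_of_mem h₁; omega)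
      (by have := hE.lt_of_mem h₂; omega), Finset.insert_erase
      (Finset.mem_erase.2 ⟨hne, h₂⟩), Finset.insert_erase h₁, hE.2.1]
  have hcard : F.card + 2 = E.card := by
    rw [← one_add_one_eq_two, ← add_assoc,
      Finset.card_erase_add_one (Finset.mem_erase.2 ⟨hne, h₂⟩), Finset.card_erase_add_one h₁]
  have := inversions_pdPerm_le_card n F
  rw [hperm, ← hE.2.2] at this
  omega

lemma mem_of_mem_left (hE : IsPipeDream n u E) (h₀ : (i, c) ∉ E) (h₁ : (i, c + 1) ∈ E)
    (hleft : ∀ q, 0 < q → q ≤ s → (i + q, c) ∈ E) :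
    ∀ q, 0 < q → q ≤ s → (i + q, c + 1) ∈ E := by
  intro q
  induction q using Nat.strong_induction_on with
  | _ q ih =>
    intro hq hqs
    by_contra h
    exact hE.not_crossed_twice hq h₀ h₁ (hleft q hq hqs) h
      fun q' hq' hq'q => ⟨hleft q' hq' (by omega), ih q' hq'q hq' (by omega)⟩

lemma insert_erase_of_isLadder {m : ℕ} (hE : IsPipeDream n u E) (h₁ : (i, c + 1) ∈ E)
    (hF : IsLadder (E.erase (i, c + 1)) i m c) :
    IsPipeDream n u (insert (i + m, c) (E.erase (i, c + 1))) := by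
  have hm := hF.pos
  have hbound : i + m + c < n := by
    by_cases hm₁ : m = 1
    · have := hE.lt_of_mem h₁; omega
    · have := hE.lt_of_mem
        (Finset.mem_of_mem_erase (hF.between (m - 1) (by omega) (by omega)).2)
      omega
  refine ⟨fun p hp => ?_, ?_, ?_⟩
  · rcases Finset.mem_insert.1 hp with rfl | hp
    · exact hbound
    · exact hE.1 p (Finset.mem_of_mem_erase hp)
  · rw [← hF.pdPerm_insert_top_eq (by have := hE.lt_of_mem h₁; omega) (by omega),
      Finset.insert_erase h₁, hE.2.1]
  · rw [Finset.card_insert_of_notMem hF.bot_left, Finset.card_erase_add_one h₁, hE.2.2]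

lemma isLadderMove_of_isLadder {m : ℕ} (h₁ : (i, c + 1) ∈ E)
    (hF : IsLadder (E.erase (i, c + 1)) i m c) :
    IsLadderMove (insert (i + m, c) (E.erase (i, c + 1))) E (i + m) c m := by
  have hm := hF.pos
  refine ⟨hm, by omega, Finset.mem_insert_self _ _, ?_, ?_, ?_, fun q hq hqm => ?_, ?_⟩
  · simpa using hF.bot_right
  · simpa [show i + m - m = i by omega, hm.ne'] using hF.top_left
  · simp [show i + m - m = i by omega]
  · obtain ⟨h₀, h₁⟩ := hF.between (m - q) (by omega) (by omega)
    rw [show i + m - q = i + (m - q) by omega]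
    exact ⟨Finset.mem_insert_of_mem h₀, Finset.mem_insert_of_mem h₁⟩
  · rw [Finset.erase_insert hF.bot_left, show i + m - m = i by omega, Finset.insert_erase h₁]

end IsPipeDream

lemma exists_free_below (E : Finset (ℕ × ℕ)) (i c : ℕ) :
    ∃ m, 0 < m ∧ (i + m, c) ∉ E ∧ (i + m, c + 1) ∉ E := by
  refine ⟨E.sup Prod.fst + 1, by omega, fun h => ?_, fun h => ?_⟩ <;>
  · have := Finset.le_sup (f := Prod.fst) h
    simp only at this
    omega

/-- The inverse ladder move `L⁻¹_{i,c+1}` drops the cross at `(i, c + 1)` to the first row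
below `i` that is free at both columns `c` and `c + 1`. -/
noncomputable def invLadderDepth (E : Finset (ℕ × ℕ)) (i c : ℕ) : ℕ :=
  Nat.find (exists_free_below E i c)

noncomputable def invLadderStep (E : Finset (ℕ × ℕ)) (i c : ℕ) : Finset (ℕ × ℕ) :=
  insert (i + invLadderDepth E i c, c) (E.erase (i, c + 1))

namespace IsPipeDream

variable {n : ℕ} {u : Equiv.Perm ℕ} {E : Finset (ℕ × ℕ)} {i c : ℕ}

lemma isLadder_erase (hE : IsPipeDream n u E) (h₀ : (i, c) ∉ E) (h₁ : (i, c + 1) ∈ E)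
    (hjust : ∀ r, i < r → (r, c + 1) ∈ E → (r, c) ∈ E) :
    IsLadder (E.erase (i, c + 1)) i (invLadderDepth E i c) c := by
  obtain ⟨hm, hbot₀, hbot₁⟩ : 0 < invLadderDepth E i c ∧ (i + invLadderDepth E i c, c) ∉ E ∧
      (i + invLadderDepth E i c, c + 1) ∉ E :=
    Nat.find_spec (exists_free_below E i c)
  have hleft : ∀ q, 0 < q → q < invLadderDepth E i c → (i + q, c) ∈ E := fun q hq hqm => by
    by_contra h
    exact (Nat.find_min (exists_free_below E i c) hqm)
      ⟨hq, h, fun h' => h (hjust _ (by omega) h')⟩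
  have hright := hE.mem_of_mem_left h₀ h₁ (s := invLadderDepth E i c - 1)
    fun q hq hqm => hleft q hq (by omega)
  refine ⟨hm, by simp [h₀], by simp, by simp [hbot₀], by simp [hbot₁], fun q hq hqm => ?_⟩
  simp only [Finset.mem_erase, ne_eq, Prod.mk.injEq, add_eq_left, hq.ne', false_and,
    not_false_eq_true, true_and]
  exact ⟨hleft q hq hqm, hright q hq (by omega)⟩

theorem invLadderStep (hE : IsPipeDream n u E) (h₀ : (i, c) ∉ E) (h₁ : (i, c + 1) ∈ E)
    (hjust : ∀ r, i < r → (r, c + 1) ∈ E → (r, c) ∈ E) :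
    IsInvLadderMove E (invLadderStep E i c) i (c + 1) ∧ IsPipeDream n u (invLadderStep E i c) :=
  have hF := hE.isLadder_erase h₀ h₁ hjust
  ⟨⟨_, _, (Nat.add_sub_cancel ..).symm, isLadderMove_of_isLadder h₁ hF⟩,
    hE.insert_erase_of_isLadder h₁ hF⟩

end IsPipeDream

noncomputable def invLadderSeq (D : Finset (ℕ × ℕ)) (i j : ℕ) : ℕ → Finset (ℕ × ℕ)
  | 0 => D
  | t + 1 => invLadderStep (invLadderSeq D i j t) i (j + t)

/-- The shape of row `i` and of the rows below it after the moves at columns `j + 1, …, c`. -/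
structure IsInvLadderStage (D E : Finset (ℕ × ℕ)) (i c k : ℕ) : Prop where
  left_free : (i, c) ∉ E
  row_crossed : ∀ x, c < x → x ≤ k → (i, x) ∈ E
  below_eq : ∀ r x, i < r → c ≤ x → ((r, x) ∈ E ↔ (r, x) ∈ D)

namespace IsInvLadderStage

variable {n : ℕ} {u : Equiv.Perm ℕ} {D E : Finset (ℕ × ℕ)} {i c k : ℕ}

lemma start {j : ℕ} (hij : (i, j) ∉ D ∧ (i, j + 1) ∈ D)
    (hkmin : ∀ k', j < k' → (i, k' + 1) ∉ D → k ≤ k') : IsInvLadderStage D D i j k := by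
  refine ⟨hij.1, fun x hjx hxk => ?_, fun _ _ _ _ => Iff.rfl⟩
  by_contra hx
  obtain rfl | hjx := (Nat.succ_le_of_lt hjx).eq_or_lt
  · exact hx hij.2
  · have := hkmin (x - 1) (by omega) (by rwa [Nat.sub_add_cancel (by omega)])
    omega

lemma step (hS : IsInvLadderStage D E i c k) (hE : IsPipeDream n u E)
    (hjust : ∀ r x, i < r → (r, x + 1) ∈ D → (r, x) ∈ D) (hck : c < k) :
    IsInvLadderMove E (invLadderStep E i c) i (c + 1) ∧
      IsPipeDream n u (invLadderStep E i c) ∧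
      IsInvLadderStage D (invLadderStep E i c) i (c + 1) k := by
  have h₁ := hS.row_crossed (c + 1) (by omega) hck
  obtain ⟨hmove, hE'⟩ := hE.invLadderStep hS.left_free h₁ fun r hr h =>
    (hS.below_eq r c hr le_rfl).2 (hjust r c hr ((hS.below_eq r (c + 1) hr (by omega)).1 h))
  have hm : 0 < invLadderDepth E i c := (Nat.find_spec (exists_free_below E i c)).1
  refine ⟨hmove, hE', ⟨?_, fun x hcx hxk => ?_, fun r x hr hcx => ?_⟩⟩
  · simp [invLadderStep, hm.ne']
  · simp [invLadderStep, hS.row_crossed x (by omega) hxk, show x ≠ c + 1 by omega]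
  · simp [invLadderStep, hS.below_eq r x hr (by omega), show x ≠ c by omega, hr.ne']

end IsInvLadderStage

lemma invLadderSeq_stage {n : ℕ} {u : Equiv.Perm ℕ} {D : Finset (ℕ × ℕ)} {i j k : ℕ}
    (hD : IsPipeDream n u D) (hij : (i, j) ∉ D ∧ (i, j + 1) ∈ D)
    (hjust : ∀ r x, i < r → (r, x + 1) ∈ D → (r, x) ∈ D)
    (hkmin : ∀ k', j < k' → (i, k' + 1) ∉ D → k ≤ k') :
    ∀ t ≤ k - j, IsPipeDream n u (invLadderSeq D i j t) ∧
      IsInvLadderStage D (invLadderSeq D i j t) i (j + t) k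
  | 0, _ => ⟨hD, IsInvLadderStage.start hij hkmin⟩
  | t + 1, ht => by
    obtain ⟨hE, hS⟩ := invLadderSeq_stage hD hij hjust hkmin t (by omega)
    obtain ⟨-, hE', hS'⟩ := hS.step hE hjust (by omega)
    exact ⟨hE', hS'⟩

theorem inverse_ladder_moves_can_be_performed_general
    (n : ℕ) (u : Equiv.Perm ℕ)
    (D : Finset (ℕ × ℕ)) (hD : IsPipeDream n u D)
    (i j k : ℕ)
    (hij : (i, j) ∉ D ∧ (i, j + 1) ∈ D)
    (himax : ∀ i' j', (i', j') ∉ D → (i', j' + 1) ∈ D → i' ≤ i)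
    (hkmin : ∀ k', j < k' → (i, k' + 1) ∉ D → k ≤ k') :
    ∃ E : ℕ → Finset (ℕ × ℕ), E 0 = D ∧
      ∀ t, t < k - j →
        IsInvLadderMove (E t) (E (t + 1)) i (j + 1 + t) ∧
          IsPipeDream n u (E (t + 1)) := by
  have hjust : ∀ r x, i < r → (r, x + 1) ∈ D → (r, x) ∈ D := fun r x hr h => by
    by_contra h'
    have := himax r x h' h
    omega
  refine ⟨invLadderSeq D i j, rfl, fun t ht => ?_⟩
  obtain ⟨hE, hS⟩ := invLadderSeq_stage hD hij hjust hkmin t ht.le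
  obtain ⟨hmove, hE', -⟩ := hS.step hE hjust (by omega)
  rw [add_right_comm]
  exact ⟨hmove, hE'⟩

/-- Let `D` be a pipe dream for `u ∈ S_n`. Let `i` be maximal such that there is `j`
with `(i,j) ∉ D` and `(i,j+1) ∈ D`; let `j` be maximal with this property; and let
`k > j` be minimal with `(i,k+1) ∉ D`. Then the inverse ladder moves
`L⁻¹_{i,j+1}, L⁻¹_{i,j+2}, …, L⁻¹_{i,k}` can be performed in this order: each
successive move is a valid inverse ladder move on the pipe dream produced by the
previous ones, and each intermediate result is again a pipe dream for `u`. -/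
theorem inverse_ladder_moves_can_be_performed
    (n : ℕ) (u : Equiv.Perm ℕ) (hu : ∀ i, n ≤ i → u i = i)
    (D : Finset (ℕ × ℕ)) (hD : IsPipeDream n u D)
    (i j k : ℕ)
    (hij : (i, j) ∉ D ∧ (i, j + 1) ∈ D)
    (himax : ∀ i' j', (i', j') ∉ D → (i', j' + 1) ∈ D → i' ≤ i)
    (hjmax : ∀ j', (i, j') ∉ D → (i, j' + 1) ∈ D → j' ≤ j)
    (hjk : j < k) (hk : (i, k + 1) ∉ D)
    (hkmin : ∀ k', j < k' → (i, k' + 1) ∉ D → k ≤ k') :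
    ∃ E : ℕ → Finset (ℕ × ℕ), E 0 = D ∧
      ∀ t, t < k - j →
        IsInvLadderMove (E t) (E (t + 1)) i (j + 1 + t) ∧
          IsPipeDream n u (E (t + 1)) :=
  inverse_ladder_moves_can_be_performed_general n u D hD i j k hij himax hkmin
end

section
/- Let u ∈ S_n and μ := max{i : c_i(u) > 0}. Then there is an injection φ_u : PD(u) → Φ_μ that is weight-preserving, i.e., wt_u(φ_u(D)) = wt(D) for all pipe dreams D ∈ PD(u). -/
open scoped Classical

/-- A ladder index is a pair `(i, [k_1, …, k_ℓ])`; the row `i` is 0-indexed here. -/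
abbrev LIdx : Type := ℕ × List ℕ

/-- `|𝐢| = i + k_1 + ⋯ + k_ℓ`, 0-indexed (one less than the 1-indexed `|𝐢|`). -/
def lidxSz (a : LIdx) : ℕ := a.1 + a.2.sum

/-- Membership in the set `L_μ` of ladder indices, where `μ` is the 0-indexed largest
row with a nonzero code entry (so `μ = (paper's μ) - 1`): `ℓ ≥ 1`, all `k_p ≥ 1`, and
`i + k_1 + ⋯ + k_ℓ ≤ μ` (0-indexed). -/
def memL (μ : ℕ) (a : LIdx) : Prop :=
  a.2 ≠ [] ∧ (∀ k ∈ a.2, 1 ≤ k) ∧ lidxSz a ≤ μ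

/-- The (total) ladder order on ladder indices: `(i, ks) ≺ (i', ks')` iff `i > i'`, or
`i = i'` and `ks` is lexicographically smaller than `ks'` (with a proper prefix being
*larger* than the word it is a prefix of). -/
def lidxLt (a b : LIdx) : Prop :=
  b.1 < a.1 ∨ (a.1 = b.1 ∧
    ((∃ j, j < a.2.length ∧ j < b.2.length ∧ a.2.take j = b.2.take j ∧
        a.2.getD j 0 < b.2.getD j 0) ∨
      (b.2 <+: a.2 ∧ a.2 ≠ b.2)))

/-- A ladder sequence in `Φ_μ`: an `ℕ`-valued vector indexed by `L_μ`
(realized as a function on all of `LIdx` vanishing off `L_μ`). -/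
def memPhi (μ : ℕ) (x : LIdx → ℕ) : Prop :=
  ∀ a : LIdx, ¬ memL μ a → x a = 0

/-- The `u`-weight of a ladder sequence `x ∈ Φ_μ` (0-indexed in `j`):
`wt_u(x)_j = c_j(u) - Σ_{𝐢 ∈ L_μ, |𝐢| = j} x_𝐢 + Σ_{𝐢 ∈ L_μ, i = j} x_𝐢`. -/
noncomputable def wtu (u : Equiv.Perm ℕ) (μ : ℕ) (x : LIdx → ℕ) (j : ℕ) : ℤ :=
  (lehmerCode u j : ℤ)
    - ∑ᶠ a ∈ {a : LIdx | memL μ a ∧ lidxSz a = j}, (x a : ℤ)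
    + ∑ᶠ a ∈ {a : LIdx | memL μ a ∧ a.1 = j}, (x a : ℤ)

/-!
Reading the crosses of a pipe dream `D` for `u` row by row, from right to left, gives a reduced
word for `u`, so each letter creates exactly one inversion `(a, b)`, `a < b`, of `u`; call `a` the
origin of the letter. Recording every letter as the pair (row, origin) gives a multiset in which
the pairs with origin `s` number `c_s(u)` and those with row `j` number `wt(D)_j`. Origins are never
smaller than rows, so the diagonal pairs `(s, s)` cancel in `wt_u` and the off-diagonal pairs
`(i, s)` become the ladder sequence with `x_(i, [s - i])` the number of such pairs.

The map is injective: the diagonal multiplicities are forced by the code, and the multiset of pairs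
determines the word, since its first row is the least row and its first letter `b` is read off as
the maximum of `u(a) - 1` over the origins `a` in that row.
-/

namespace PipeDream

open Equiv

/-! ### Products of simple transpositions -/

def wordProd (w : List ℕ) : Perm ℕ := (w.map fun k => swap k (k + 1)).prod

@[simp] lemma wordProd_nil : wordProd [] = 1 := rfl

@[simp] lemma wordProd_cons (b : ℕ) (w : List ℕ) :
    wordProd (b :: w) = swap b (b + 1) * wordProd w := by
  simp [wordProd]

def invSet (u : Perm ℕ) : Set (ℕ × ℕ) := {p | p.1 < p.2 ∧ u p.2 < u p.1}

lemma lehmerCode_eq_ncard_invSet (u : Perm ℕ) (j : ℕ) :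
    lehmerCode u j = (invSet u ∩ {p | p.1 = j}).ncard := by
  rw [lehmerCode, ← Set.ncard_image_of_injective _ (Prod.mk_right_injective j)]
  congr 1
  ext ⟨x, y⟩
  simp only [invSet, Set.mem_image, Set.mem_inter_iff, Set.mem_ofPred_eq, Prod.mk.injEq]
  constructor
  · rintro ⟨y, h, rfl, rfl⟩
    exact ⟨h, rfl⟩
  · rintro ⟨h, rfl⟩
    exact ⟨y, h, rfl, rfl⟩

@[simp] lemma invSet_one : invSet 1 = ∅ :=
  Set.eq_empty_of_forall_notMem fun _ h => h.1.not_gt h.2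

section SwapMul

variable (V : Perm ℕ) (b : ℕ)

lemma invSet_swap_mul_subset :
    invSet (swap b (b + 1) * V) ⊆ insert (V⁻¹ b, V⁻¹ (b + 1)) (invSet V) := by
  rintro ⟨x, y⟩ ⟨hxy, hV⟩
  simp only [Perm.mul_apply, swap_apply_def] at hV
  simp only [invSet, Set.mem_insert_iff, Set.mem_ofPred_eq, Prod.mk.injEq, Perm.eq_inv_iff_eq]
  split_ifs at hV <;> omega

lemma mem_invSet_swap_mul_iff :
    (V⁻¹ b, V⁻¹ (b + 1)) ∈ invSet (swap b (b + 1) * V) ↔ V⁻¹ b < V⁻¹ (b + 1) := by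
  simp [invSet]

variable {V b}

lemma invSet_swap_mul_of_lt (h : V⁻¹ b < V⁻¹ (b + 1)) :
    invSet (swap b (b + 1) * V) = insert (V⁻¹ b, V⁻¹ (b + 1)) (invSet V) := by
  refine (invSet_swap_mul_subset V b).antisymm
    (Set.insert_subset ((mem_invSet_swap_mul_iff V b).2 h) ?_)
  rintro ⟨x, y⟩ ⟨hxy, hV⟩
  dsimp only at hxy hV
  have hx : x ≠ V⁻¹ (b + 1) ∨ y ≠ V⁻¹ b := by
    by_contra! hc
    omega
  rw [Ne, Perm.eq_inv_iff_eq, Ne, Perm.eq_inv_iff_eq] at hx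
  refine ⟨hxy, ?_⟩
  simp only [Perm.mul_apply, swap_apply_def]
  split_ifs <;> omega

lemma lehmerCode_swap_mul_of_lt (h : V⁻¹ b < V⁻¹ (b + 1)) (hfin : (invSet V).Finite) (j : ℕ) :
    lehmerCode (swap b (b + 1) * V) j = lehmerCode V j + if j = V⁻¹ b then 1 else 0 := by
  rw [lehmerCode_eq_ncard_invSet, lehmerCode_eq_ncard_invSet, invSet_swap_mul_of_lt h]
  split_ifs with hj
  · rw [Set.insert_inter_of_mem (show _ ∈ {p : ℕ × ℕ | p.1 = j} from hj.symm),
      Set.ncard_insert_of_notMem (fun hmem => (lt_asymm hmem.1.1) (by simpa using hmem.1.2))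
        (hfin.inter_of_left _)]
  · rw [Set.insert_inter_of_notMem (show _ ∉ {p : ℕ × ℕ | p.1 = j} from Ne.symm hj), add_zero]

end SwapMul

lemma finite_invSet_wordProd (w : List ℕ) : (invSet (wordProd w)).Finite := by
  induction w with
  | nil => simp
  | cons b w ih => exact (ih.insert _).subset (by simpa using invSet_swap_mul_subset _ b)

lemma inversions_wordProd_cons_le (b : ℕ) (w : List ℕ) :
    inversions (wordProd (b :: w)) ≤ inversions (wordProd w) + 1 := by
  rw [wordProd_cons]
  exact (Set.ncard_le_ncard (invSet_swap_mul_subset _ b)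
    ((finite_invSet_wordProd w).insert _)).trans (Set.ncard_insert_le _ _)

lemma inversions_wordProd_le (w : List ℕ) : inversions (wordProd w) ≤ w.length := by
  induction w with
  | nil => exact (show (invSet 1).ncard ≤ 0 by simp)
  | cons b w ih => exact (inversions_wordProd_cons_le b w).trans (by simpa using ih)

def IsReduced (w : List ℕ) : Prop := inversions (wordProd w) = w.length

lemma IsReduced.of_cons {b : ℕ} {w : List ℕ} (h : IsReduced (b :: w)) :
    IsReduced w ∧ (wordProd w)⁻¹ b < (wordProd w)⁻¹ (b + 1) := by
  have hle := inversions_wordProd_le w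
  have hcons := inversions_wordProd_cons_le b w
  rw [IsReduced, List.length_cons] at h
  refine ⟨by rw [IsReduced]; omega, ?_⟩
  by_contra hlt
  have hsub : invSet (wordProd (b :: w)) ⊆ invSet (wordProd w) := fun p hp => by
    rw [wordProd_cons] at hp
    refine (invSet_swap_mul_subset _ b hp).resolve_left ?_
    rintro rfl
    exact hlt ((mem_invSet_swap_mul_iff _ b).1 hp)
  have : inversions (wordProd (b :: w)) ≤ inversions (wordProd w) :=
    Set.ncard_le_ncard hsub (finite_invSet_wordProd w)
  omega

lemma bddAbove_lehmerCode_pos (w : List ℕ) : BddAbove {i | 0 < lehmerCode (wordProd w) i} := by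
  refine ((finite_invSet_wordProd w).image Prod.fst).bddAbove.mono fun i hi => ?_
  rw [Set.mem_ofPred_eq, lehmerCode_eq_ncard_invSet,
    Set.ncard_pos ((finite_invSet_wordProd w).inter_of_left _)] at hi
  obtain ⟨p, hp, rfl⟩ := hi
  exact ⟨p, hp, rfl⟩

/-! ### Origins of the letters of an annotated word -/

/-- In a reduced word `(row, b) :: A`, the letter `b` creates the inversion
`((wordProd w)⁻¹ b, (wordProd w)⁻¹ (b + 1))` of the product, `w = A.map Prod.snd`; the letter is
recorded as the pair (row, origin), the origin being the first entry of that inversion. -/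
def originPairs : List (ℕ × ℕ) → List (ℕ × ℕ)
  | [] => []
  | p :: A => (p.1, (wordProd (A.map Prod.snd))⁻¹ p.2) :: originPairs A

@[simp] lemma map_fst_originPairs (A : List (ℕ × ℕ)) :
    (originPairs A).map Prod.fst = A.map Prod.fst := by
  induction A with
  | nil => rfl
  | cons p A ih => simp [originPairs, ih]

lemma countP_snd_originPairs {A : List (ℕ × ℕ)} (h : IsReduced (A.map Prod.snd)) (s : ℕ) :
    (originPairs A).countP (fun p => p.2 = s) = lehmerCode (wordProd (A.map Prod.snd)) s := by
  induction A with
  | nil => simp [originPairs, lehmerCode_eq_ncard_invSet]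
  | cons p A ih =>
    obtain ⟨hred, hlt⟩ := IsReduced.of_cons h
    rw [List.map_cons, wordProd_cons, lehmerCode_swap_mul_of_lt hlt (finite_invSet_wordProd _),
      originPairs, List.countP_cons, ih hred]
    simp [eq_comm]

/-- The order in which `pdWord` reads the crosses of a pipe dream, as (row, letter) pairs. -/
def ReadsBefore (p q : ℕ × ℕ) : Prop := p.1 < q.1 ∨ (p.1 = q.1 ∧ q.2 < p.2)

lemma fst_le_fst_of_pairwise_cons {p q : ℕ × ℕ} {A : List (ℕ × ℕ)}
    (hA : (p :: A).Pairwise ReadsBefore) (hq : q ∈ p :: A) : p.1 ≤ q.1 := by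
  rcases List.mem_cons.1 hq with rfl | hq
  · exact le_rfl
  · have := List.rel_of_pairwise_cons hA hq
    rw [ReadsBefore] at this
    omega

lemma fst_le_fst_of_mem_originPairs {p q : ℕ × ℕ} {A : List (ℕ × ℕ)}
    (hA : (p :: A).Pairwise ReadsBefore) (hq : q ∈ originPairs (p :: A)) : p.1 ≤ q.1 := by
  have : q.1 ∈ (p :: A).map Prod.fst := by
    rw [← map_fst_originPairs]
    exact List.mem_map_of_mem hq
  obtain ⟨r, hr, hrq⟩ := List.mem_map.1 this
  exact hrq ▸ fst_le_fst_of_pairwise_cons hA hr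

lemma wordProd_apply_of_lt {w : List ℕ} {r x : ℕ} (h : ∀ c ∈ w, r ≤ c) (hx : x < r) :
    wordProd w x = x := by
  induction w with
  | nil => rfl
  | cons b w ih =>
    have hb := h b List.mem_cons_self
    rw [wordProd_cons, Perm.mul_apply, ih fun c hc => h c (List.mem_cons_of_mem _ hc),
      swap_apply_of_ne_of_ne] <;> omega

lemma le_wordProd_inv_apply {w : List ℕ} {r b : ℕ} (h : ∀ c ∈ w, r ≤ c) (hb : r ≤ b) :
    r ≤ (wordProd w)⁻¹ b := by
  by_contra! hlt
  have hfix := wordProd_apply_of_lt h hlt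
  rw [← Perm.mul_apply, mul_inv_cancel, Perm.one_apply] at hfix
  omega

lemma fst_le_snd_of_mem_originPairs {A : List (ℕ × ℕ)} (hA : A.Pairwise ReadsBefore)
    (hle : ∀ p ∈ A, p.1 ≤ p.2) : ∀ q ∈ originPairs A, q.1 ≤ q.2 := by
  induction A with
  | nil => simp [originPairs]
  | cons p A ih =>
    simp only [originPairs, List.mem_cons, forall_eq_or_imp]
    refine ⟨le_wordProd_inv_apply ?_ (hle p List.mem_cons_self),
      ih hA.of_cons fun r hr => hle r (List.mem_cons_of_mem _ hr)⟩
    simp only [List.mem_map]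
    rintro _ ⟨r, hr, rfl⟩
    exact (fst_le_fst_of_pairwise_cons hA (List.mem_cons_of_mem _ hr)).trans
      (hle r (List.mem_cons_of_mem _ hr))

lemma wordProd_apply_head_origin (p : ℕ × ℕ) (A : List (ℕ × ℕ)) :
    wordProd ((p :: A).map Prod.snd) ((wordProd (A.map Prod.snd))⁻¹ p.2) = p.2 + 1 := by
  simp

lemma wordProd_apply_originPairs_le {p q : ℕ × ℕ} {A : List (ℕ × ℕ)}
    (hA : (p :: A).Pairwise ReadsBefore) (hq : q ∈ originPairs (p :: A)) (hrow : q.1 = p.1) :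
    wordProd ((p :: A).map Prod.snd) q.2 ≤ p.2 + 1 := by
  induction A generalizing p with
  | nil =>
    obtain rfl : q = _ := List.mem_singleton.1 hq
    exact (wordProd_apply_head_origin p []).le
  | cons p' A ih =>
    rcases List.mem_cons.1 hq with rfl | hq
    · exact (wordProd_apply_head_origin p _).le
    have hp' : p.1 = p'.1 ∧ p'.2 < p.2 := by
      have h1 := fst_le_fst_of_mem_originPairs hA.of_cons hq
      have h2 := List.rel_of_pairwise_cons hA List.mem_cons_self
      rw [ReadsBefore] at h2
      omega
    have h := ih hA.of_cons hq (hrow.trans hp'.1)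
    rw [List.map_cons, wordProd_cons, Perm.mul_apply, swap_apply_def]
    split_ifs <;> omega

lemma head_eq_of_mem_originPairs_iff {p q : ℕ × ℕ} {A B : List (ℕ × ℕ)}
    (hA : (p :: A).Pairwise ReadsBefore) (hB : (q :: B).Pairwise ReadsBefore)
    (hprod : wordProd ((p :: A).map Prod.snd) = wordProd ((q :: B).map Prod.snd))
    (hmem : ∀ r, r ∈ originPairs (p :: A) ↔ r ∈ originPairs (q :: B)) : p = q := by
  have hpA : (p.1, (wordProd (A.map Prod.snd))⁻¹ p.2) ∈ originPairs (p :: A) :=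
    List.mem_cons_self
  have hqB : (q.1, (wordProd (B.map Prod.snd))⁻¹ q.2) ∈ originPairs (q :: B) :=
    List.mem_cons_self
  have hpB := (hmem _).1 hpA
  have hqA := (hmem _).2 hqB
  have hpq := fst_le_fst_of_mem_originPairs hA hqA
  have hqp := fst_le_fst_of_mem_originPairs hB hpB
  have hrow : p.1 = q.1 := le_antisymm hpq hqp
  have hpq' := wordProd_apply_originPairs_le hB hpB hrow
  have hqp' := wordProd_apply_originPairs_le hA hqA hrow.symm
  rw [← hprod, wordProd_apply_head_origin] at hpq'
  rw [hprod, wordProd_apply_head_origin] at hqp'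
  exact Prod.ext hrow (by omega)

lemma eq_of_originPairs_eq {A B : List (ℕ × ℕ)}
    (hA : A.Pairwise ReadsBefore) (hB : B.Pairwise ReadsBefore)
    (hprod : wordProd (A.map Prod.snd) = wordProd (B.map Prod.snd))
    (horig : (originPairs A : Multiset (ℕ × ℕ)) = originPairs B) : A = B := by
  induction A generalizing B with
  | nil =>
    cases B
    · rfl
    · exact absurd horig.symm (by simp [originPairs])
  | cons p A ih =>
    cases B with
    | nil => simp [originPairs] at horig
    | cons q B =>
      obtain rfl : p = q := head_eq_of_mem_originPairs_iff hA hB hprod fun r => by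
        rw [← Multiset.mem_coe, horig, Multiset.mem_coe]
      have htail : wordProd (A.map Prod.snd) = wordProd (B.map Prod.snd) := by
        simpa using hprod
      simp only [originPairs, ← Multiset.cons_coe, htail, Multiset.cons_inj_right] at horig
      rw [ih hA.of_cons hB.of_cons htail horig]

/-! ### The reading word of a pipe dream -/

def rowLetter (p : ℕ × ℕ) : ℕ × ℕ := (p.1, p.1 + p.2)

lemma rowLetter_injective : Function.Injective rowLetter := fun p q h => by
  simp only [rowLetter, Prod.mk.injEq] at h
  exact Prod.ext h.1 (by omega)

def readingWord (n : ℕ) (D : Finset (ℕ × ℕ)) : List (ℕ × ℕ) :=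
  ((List.range n).map fun i =>
    (((List.range n).reverse.filter fun j => decide ((i, j) ∈ D)).map
      fun j => rowLetter (i, j))).flatten

lemma map_snd_readingWord (n : ℕ) (D : Finset (ℕ × ℕ)) :
    (readingWord n D).map Prod.snd = pdWord n D := by
  simp [readingWord, pdWord, rowLetter, List.map_flatten, Function.comp_def]

lemma pairwise_readingWord (n : ℕ) (D : Finset (ℕ × ℕ)) :
    (readingWord n D).Pairwise ReadsBefore := by
  rw [readingWord, List.pairwise_flatten, List.pairwise_map, List.forall_mem_map]
  refine ⟨fun i _ => ?_, List.pairwise_lt_range.imp fun hij _ hx _ hy => ?_⟩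
  · refine List.pairwise_map.2 ((List.pairwise_reverse.2 List.pairwise_lt_range).sublist
      List.filter_sublist |>.imp fun h => Or.inr ⟨rfl, ?_⟩)
    simp only [rowLetter]
    omega
  · obtain ⟨_, -, rfl⟩ := List.mem_map.1 hx
    obtain ⟨_, -, rfl⟩ := List.mem_map.1 hy
    exact Or.inl hij

lemma coe_readingWord {n : ℕ} {D : Finset (ℕ × ℕ)} (hD : ∀ p ∈ D, p.1 + p.2 + 1 ≤ n) :
    (readingWord n D : Multiset (ℕ × ℕ)) = D.val.map rowLetter := by
  have hnodup : (readingWord n D : Multiset (ℕ × ℕ)).Nodup :=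
    (pairwise_readingWord n D).imp fun h hpq => by subst hpq; simp [ReadsBefore] at h
  rw [Multiset.Nodup.ext hnodup (D.nodup.map rowLetter_injective)]
  intro q
  simp only [Multiset.mem_coe, readingWord, List.mem_flatten, List.mem_map, List.mem_filter,
    List.mem_reverse, List.mem_range, decide_eq_true_eq, Multiset.mem_map, Finset.mem_val,
    exists_exists_and_eq_and]
  constructor
  · rintro ⟨i, -, j, ⟨-, hij⟩, rfl⟩
    exact ⟨_, hij, rfl⟩
  · rintro ⟨⟨i, j⟩, hij, rfl⟩
    have := hD _ hij
    exact ⟨i, by omega, j, ⟨by omega, hij⟩, rfl⟩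

def originMultiset (n : ℕ) (D : Finset (ℕ × ℕ)) : Multiset (ℕ × ℕ) :=
  originPairs (readingWord n D)

section Staircase

variable {n : ℕ} {D : Finset (ℕ × ℕ)}

lemma fst_le_snd_of_mem_originMultiset (hD : ∀ p ∈ D, p.1 + p.2 + 1 ≤ n) :
    ∀ p ∈ originMultiset n D, p.1 ≤ p.2 := by
  refine fst_le_snd_of_mem_originPairs (pairwise_readingWord n D) fun p hp => ?_
  rw [← Multiset.mem_coe, coe_readingWord hD, Multiset.mem_map] at hp
  obtain ⟨q, -, rfl⟩ := hp
  exact Nat.le_add_right _ _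

lemma countP_fst_originMultiset (hD : ∀ p ∈ D, p.1 + p.2 + 1 ≤ n) (j : ℕ) :
    (originMultiset n D).countP (fun p => p.1 = j) = wt D j := by
  have hfst : (originMultiset n D).map Prod.fst = D.val.map Prod.fst := by
    rw [originMultiset, Multiset.map_coe, map_fst_originPairs, ← Multiset.map_coe,
      coe_readingWord hD, Multiset.map_map]
    rfl
  rw [Multiset.countP_eq_card_filter, ← Multiset.countP_map Prod.fst _ (· = j), hfst,
    Multiset.countP_map, wt, Finset.card_def, Finset.filter_val]

end Staircase

section OfIsPipeDream

variable {n : ℕ} {u : Perm ℕ} {D : Finset (ℕ × ℕ)}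

lemma wordProd_readingWord (hD : IsPipeDream n u D) :
    wordProd ((readingWord n D).map Prod.snd) = u := by
  rw [map_snd_readingWord]
  exact hD.2.1

lemma isReduced_readingWord (hD : IsPipeDream n u D) :
    IsReduced ((readingWord n D).map Prod.snd) := by
  rw [IsReduced, wordProd_readingWord hD, List.length_map, ← Multiset.coe_card,
    coe_readingWord hD.1, Multiset.card_map, ← Finset.card_def, hD.2.2]

lemma countP_snd_originMultiset (hD : IsPipeDream n u D) (s : ℕ) :
    (originMultiset n D).countP (fun p => p.2 = s) = lehmerCode u s := by
  rw [originMultiset, Multiset.coe_countP, countP_snd_originPairs (isReduced_readingWord hD),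
    wordProd_readingWord hD]

lemma snd_le_of_mem_originMultiset (hD : IsPipeDream n u D) {μ : ℕ}
    (hμ : μ = sSup {i | 0 < lehmerCode u i}) {p : ℕ × ℕ} (hp : p ∈ originMultiset n D) :
    p.2 ≤ μ := by
  have hbdd : BddAbove {i | 0 < lehmerCode u i} := by
    rw [← hD.2.1]
    exact bddAbove_lehmerCode_pos (pdWord n D)
  have hpos : 0 < lehmerCode u p.2 := by
    rw [← countP_snd_originMultiset hD]
    exact Multiset.countP_pos.2 ⟨p, hp, rfl⟩
  exact hμ ▸ le_csSup hbdd hpos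

lemma eq_of_originMultiset_eq {E : Finset (ℕ × ℕ)} (hD : IsPipeDream n u D)
    (hE : IsPipeDream n u E) (h : originMultiset n D = originMultiset n E) : D = E := by
  have hword := eq_of_originPairs_eq (pairwise_readingWord n D) (pairwise_readingWord n E)
    ((wordProd_readingWord hD).trans (wordProd_readingWord hE).symm) h
  refine Finset.val_injective (Multiset.map_injective rowLetter_injective ?_)
  rw [← coe_readingWord hD.1, ← coe_readingWord hE.1, hword]

end OfIsPipeDream

/-! ### One-step ladder sequences -/

def toLadderIdx (p : ℕ × ℕ) : LIdx := (p.1, [p.2 - p.1])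

def ladderMultiset (M : Multiset (ℕ × ℕ)) : Multiset LIdx :=
  (M.filter fun p => p.1 < p.2).map toLadderIdx

lemma lidxSz_toLadderIdx {p : ℕ × ℕ} (h : p.1 ≤ p.2) : lidxSz (toLadderIdx p) = p.2 := by
  simp only [lidxSz, toLadderIdx, List.sum_singleton]
  omega

lemma memL_toLadderIdx {μ : ℕ} {p : ℕ × ℕ} (h : p.1 < p.2) :
    memL μ (toLadderIdx p) ↔ p.2 ≤ μ := by
  rw [memL, lidxSz_toLadderIdx h.le]
  simp only [toLadderIdx, ne_eq, List.cons_ne_nil, not_false_eq_true, List.mem_singleton,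
    forall_eq, true_and, and_iff_right_iff_imp]
  omega

lemma map_ladderMultiset (M : Multiset (ℕ × ℕ)) :
    (ladderMultiset M).map (fun a => (a.1, lidxSz a)) = M.filter fun p => p.1 < p.2 := by
  rw [ladderMultiset, Multiset.map_map]
  refine (Multiset.map_congr rfl fun p hp => ?_).trans (Multiset.map_id _)
  change (p.1, lidxSz (toLadderIdx p)) = p
  rw [lidxSz_toLadderIdx (Multiset.mem_filter.1 hp).2.le]

lemma memPhi_count_ladderMultiset {μ : ℕ} {M : Multiset (ℕ × ℕ)} (hμ : ∀ p ∈ M, p.2 ≤ μ) :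
    memPhi μ fun a => (ladderMultiset M).count a := fun a ha => by
  refine Multiset.count_eq_zero.2 fun hmem => ha ?_
  obtain ⟨p, hp, rfl⟩ := Multiset.mem_map.1 hmem
  obtain ⟨hpM, hlt⟩ := Multiset.mem_filter.1 hp
  exact (memL_toLadderIdx hlt).2 (hμ p hpM)

lemma finsum_mem_count {α : Type*} [DecidableEq α] (N : Multiset α) (S : Set α)
    [DecidablePred (· ∈ S)] :
    ∑ᶠ a ∈ S, (N.count a : ℤ) = N.countP (· ∈ S) := by
  rw [finsum_mem_eq_sum_of_inter_support_eq _ (t := (N.filter (· ∈ S)).toFinset)]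
  · rw [Multiset.countP_eq_card_filter, ← Multiset.toFinset_sum_count_eq, Nat.cast_sum]
    refine Finset.sum_congr rfl fun a ha => ?_
    rw [Multiset.count_filter_of_pos (Multiset.mem_filter.1 (Multiset.mem_toFinset.1 ha)).2]
  · ext a
    simp [and_comm]

lemma countP_eq_countP_filter_lt_add_count {M : Multiset (ℕ × ℕ)} (hle : ∀ p ∈ M, p.1 ≤ p.2)
    {P : ℕ × ℕ → Prop} [DecidablePred P] {j : ℕ} (hP : ∀ i, P (i, i) ↔ i = j) :
    M.countP P = (M.filter fun p => p.1 < p.2).countP P + M.count (j, j) := by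
  rw [Multiset.countP_eq_countP_filter_add M P fun p => p.1 < p.2, Multiset.count,
    Multiset.countP_filter, Multiset.countP_filter]
  congr 1
  refine Multiset.countP_congr rfl fun p hp => propext ?_
  obtain ⟨i, s⟩ := p
  have hi : i ≤ s := hle _ hp
  obtain rfl | hlt := hi.eq_or_lt
  · simp [hP, eq_comm]
  · exact iff_of_false (fun h => h.2 hlt) fun h => by
      rw [Prod.mk.injEq] at h
      omega

lemma wtu_count_ladderMultiset {u : Perm ℕ} {μ : ℕ} {M : Multiset (ℕ × ℕ)}
    (hle : ∀ p ∈ M, p.1 ≤ p.2) (hμ : ∀ p ∈ M, p.2 ≤ μ)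
    (hcode : ∀ s, M.countP (fun p => p.2 = s) = lehmerCode u s) (j : ℕ) :
    wtu u μ (fun a => (ladderMultiset M).count a) j = M.countP (fun p => p.1 = j) := by
  have hsum (P : LIdx → Prop) (Q : ℕ × ℕ → Prop) [DecidablePred Q]
      (hPQ : ∀ p ∈ M, p.1 < p.2 → (P (toLadderIdx p) ↔ Q p)) :
      ∑ᶠ a ∈ {a | memL μ a ∧ P a}, ((ladderMultiset M).count a : ℤ)
        = (M.filter fun p => p.1 < p.2).countP Q := by
    rw [finsum_mem_count, ladderMultiset, Multiset.countP_map, ← Multiset.countP_eq_card_filter]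
    refine congrArg _ (Multiset.countP_congr rfl fun p hp => propext ?_)
    obtain ⟨hpM, hlt⟩ := Multiset.mem_filter.1 hp
    rw [Set.mem_ofPred_eq, memL_toLadderIdx hlt, hPQ p hpM hlt, and_iff_right (hμ p hpM)]
  rw [wtu, hsum (fun a => lidxSz a = j) (fun p => p.2 = j)
      fun p _ hlt => by rw [lidxSz_toLadderIdx hlt.le],
    hsum (fun a => a.1 = j) (fun p => p.1 = j) fun _ _ _ => Iff.rfl, ← hcode,
    countP_eq_countP_filter_lt_add_count hle (P := fun p => p.2 = j) fun _ => Iff.rfl,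
    countP_eq_countP_filter_lt_add_count hle (P := fun p => p.1 = j) fun _ => Iff.rfl]
  push_cast
  ring

lemma eq_of_ladderMultiset_eq {M M' : Multiset (ℕ × ℕ)} (hle : ∀ p ∈ M, p.1 ≤ p.2)
    (hle' : ∀ p ∈ M', p.1 ≤ p.2)
    (hsnd : ∀ s, M.countP (fun p => p.2 = s) = M'.countP (fun p => p.2 = s))
    (h : ladderMultiset M = ladderMultiset M') : M = M' := by
  have hoff : M.filter (fun p => p.1 < p.2) = M'.filter (fun p => p.1 < p.2) := by
    rw [← map_ladderMultiset, h, map_ladderMultiset]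
  refine Multiset.ext.2 fun ⟨i, s⟩ => ?_
  rcases lt_trichotomy i s with hlt | rfl | hgt
  · rw [← Multiset.count_filter_of_pos (p := fun p => p.1 < p.2) (a := (i, s)) hlt, hoff,
      Multiset.count_filter_of_pos (p := fun p => p.1 < p.2) (a := (i, s)) hlt]
  · have hM := countP_eq_countP_filter_lt_add_count hle (P := fun p => p.2 = i) fun _ => Iff.rfl
    have hM' := countP_eq_countP_filter_lt_add_count hle' (P := fun p => p.2 = i) fun _ => Iff.rfl
    rw [hsnd, hM', hoff] at hM
    omega
  · rw [Multiset.count_eq_zero.2 fun hp => (hle _ hp).not_gt hgt,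
      Multiset.count_eq_zero.2 fun hp => (hle' _ hp).not_gt hgt]

end PipeDream

open PipeDream

theorem exists_weight_preserving_injection_pipeDreams_ladderSequences_general
    (n : ℕ) (u : Equiv.Perm ℕ)
    (μ : ℕ) (hμ : μ = sSup {i | 0 < lehmerCode u i}) :
    ∃ φ : Finset (ℕ × ℕ) → (LIdx → ℕ),
      Set.InjOn φ {D | IsPipeDream n u D} ∧
      ∀ D : Finset (ℕ × ℕ), IsPipeDream n u D →
        memPhi μ (φ D) ∧ ∀ j, wtu u μ (φ D) j = (wt D j : ℤ) := by
  refine ⟨fun D a => (ladderMultiset (originMultiset n D)).count a, ?_, fun D hD => ⟨?_, ?_⟩⟩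
  · intro D hD E hE hDE
    refine eq_of_originMultiset_eq hD hE (eq_of_ladderMultiset_eq
      (fst_le_snd_of_mem_originMultiset hD.1) (fst_le_snd_of_mem_originMultiset hE.1)
      (fun s => by rw [countP_snd_originMultiset hD, countP_snd_originMultiset hE]) ?_)
    exact Multiset.ext.2 fun a => congrFun hDE a
  · exact memPhi_count_ladderMultiset fun _ => snd_le_of_mem_originMultiset hD hμ
  · intro j
    rw [wtu_count_ladderMultiset (fst_le_snd_of_mem_originMultiset hD.1)
      (fun _ => snd_le_of_mem_originMultiset hD hμ) (countP_snd_originMultiset hD),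
      countP_fst_originMultiset hD.1]

/-- There is a weight-preserving injection `φ_u : PD(u) → Φ_μ`, where
`μ = max {i : c_i(u) > 0}` (formalized 0-indexed as `μ = sSup {i | c_i(u) > 0}`,
one less than the 1-indexed maximum). -/
theorem exists_weight_preserving_injection_pipeDreams_ladderSequences
    (n : ℕ) (u : Equiv.Perm ℕ) (hu : ∀ i, n ≤ i → u i = i)
    (μ : ℕ) (hμ : μ = sSup {i | 0 < lehmerCode u i}) :
    ∃ φ : Finset (ℕ × ℕ) → (LIdx → ℕ),
      Set.InjOn φ {D | IsPipeDream n u D} ∧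
      ∀ D : Finset (ℕ × ℕ), IsPipeDream n u D →
        memPhi μ (φ D) ∧ ∀ j, wtu u μ (φ D) j = (wt D j : ℤ) :=
  exists_weight_preserving_injection_pipeDreams_ladderSequences_general n u μ hμ
end

section
/- For N ≥ 1 and σ ∈ S_3 (one-line notation), let F_σ(N) := #{(a,b,c,d) ∈ ℕ^4 : a+c+d ≤ N−3+σ(3), a+b+d ≤ N+1−σ(1), a+b+c+2d ≤ 2N−σ(1), a+b+d ≥ 2−σ(1)} (inequalities over the integers). Then for all N ≥ 1: F_{123}(N) = (N+1)(N+2)²(N+3)/12 − 2(N+1); F_{132}(N) = F_{213}(N) = N(N+1)(N+2)(N+3)/12 − N; F_{231}(N) = F_{312}(N) = (N−1)N(N+1)(N+2)/12; and F_{321}(N) = (N−1)N²(N+1)/12. -/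
/-!
Put `p = σ(1) - 1`, `q = σ(3) - 1`, `k₁ = N - 1 + q` and `k₂ = N + 1 - p`. The first two
inequalities say that `(a, b, c, d)` lies in the double simplex `a + c + d < k₁`, `a + b + d < k₂`.
Adding them, the third inequality can fail there only if `q = 2`, `a = 0` and both are tight
(`min k₁ k₂` points), and the fourth only if `p = 0` and `a = b = d = 0` (`k₁` points).
Fibring the double simplex over `s = a + d` counts it as `∑_{s < min k₁ k₂} (s+1)(k₁-s)(k₂-s)`,
a polynomial sum evaluated by induction.
-/

/-- For `σ ∈ S_3` (acting on `{0, 1, 2}`, so that the 1-indexed values are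
`σ(1) = σ 0 + 1` and `σ(3) = σ 2 + 1`) and `N ≥ 1`, the number of quadruples
`(a, b, c, d) ∈ ℕ⁴` with `a + c + d ≤ N - 3 + σ(3)`, `a + b + d ≤ N + 1 - σ(1)`,
`a + b + c + 2d ≤ 2N - σ(1)` and `a + b + d ≥ 2 - σ(1)` (inequalities in `ℤ`). -/
noncomputable def Fcount (σ : Equiv.Perm (Fin 3)) (N : ℕ) : ℕ :=
  Set.ncard {t : ℕ × ℕ × ℕ × ℕ |
    ((t.1 : ℤ) + t.2.2.1 + t.2.2.2 ≤ (N : ℤ) - 3 + (((σ 2 : ℕ) : ℤ) + 1)) ∧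
    ((t.1 : ℤ) + t.2.1 + t.2.2.2 ≤ (N : ℤ) + 1 - (((σ 0 : ℕ) : ℤ) + 1)) ∧
    ((t.1 : ℤ) + t.2.1 + t.2.2.1 + 2 * t.2.2.2 ≤ 2 * (N : ℤ) - (((σ 0 : ℕ) : ℤ) + 1)) ∧
    (2 - (((σ 0 : ℕ) : ℤ) + 1) ≤ (t.1 : ℤ) + t.2.1 + t.2.2.2)}

open Finset

theorem sum_range_succ_mul_sub_mul_sub (n : ℕ) (x y : ℚ) :
    ∑ s ∈ range n, ((s : ℚ) + 1) * (x - s) * (y - s) =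
      n * (n + 1) * (6 * x * y - 4 * (x + y) * (n - 1) + (n - 1) * (3 * n - 2)) / 12 := by
  induction n with
  | zero => simp
  | succ n ih => rw [sum_range_succ, ih]; push_cast; ring

theorem card_filter_and_add_card_filter_not_add_card_filter_not {α : Type*} (s : Finset α)
    (p q : α → Prop) [DecidablePred p] [DecidablePred q] (h : ∀ x ∈ s, p x ∨ q x) :
    #{x ∈ s | p x ∧ q x} + #{x ∈ s | ¬p x} + #{x ∈ s | ¬q x} = #s := by
  classical
  have hdisj : Disjoint {x ∈ s | ¬p x} {x ∈ s | ¬q x} :=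
    disjoint_filter.mpr fun x hx hp hq => (h x hx).elim hp hq
  rw [add_assoc, ← card_union_of_disjoint hdisj, ← filter_or]
  simp only [← not_and_or]
  exact card_filter_add_card_filter_not _

def doubleSimplex (k₁ k₂ : ℕ) : Finset (ℕ × ℕ × ℕ × ℕ) :=
  {t ∈ range k₁ ×ˢ range k₂ ×ˢ range k₁ ×ˢ range k₁ |
    t.1 + t.2.2.1 + t.2.2.2 < k₁ ∧ t.1 + t.2.1 + t.2.2.2 < k₂}

theorem mem_doubleSimplex {k₁ k₂ a b c d : ℕ} :
    (a, b, c, d) ∈ doubleSimplex k₁ k₂ ↔ a + c + d < k₁ ∧ a + b + d < k₂ := by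
  simp only [doubleSimplex, mem_filter, mem_product, mem_range, and_iff_right_iff_imp]
  omega

theorem card_doubleSimplex_filter_add_eq (k₁ k₂ s : ℕ) :
    #{t ∈ doubleSimplex k₁ k₂ | t.1 + t.2.2.2 = s} = (s + 1) * (k₁ - s) * (k₂ - s) := by
  rw [← Nat.card_antidiagonal s, ← card_range (k₁ - s), ← card_range (k₂ - s),
    ← card_product, ← card_product]
  refine card_nbij' (fun ⟨a, b, c, d⟩ => (((a, d), c), b)) (fun ⟨⟨⟨a, d⟩, c⟩, b⟩ => (a, b, c, d))
    ?_ ?_ (fun _ _ => rfl) (fun _ _ => rfl)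
  · rintro ⟨a, b, c, d⟩
    simp only [coe_filter, Set.mem_ofPred_eq, mem_doubleSimplex, mem_coe, mem_product,
      HasAntidiagonal.mem_antidiagonal, mem_range]
    omega
  · rintro ⟨⟨⟨a, d⟩, c⟩, b⟩
    simp only [coe_filter, Set.mem_ofPred_eq, mem_doubleSimplex, mem_coe, mem_product,
      HasAntidiagonal.mem_antidiagonal, mem_range]
    omega

theorem card_doubleSimplex_eq_sum (k₁ k₂ : ℕ) :
    #(doubleSimplex k₁ k₂) = ∑ s ∈ range (min k₁ k₂), (s + 1) * (k₁ - s) * (k₂ - s) := by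
  rw [card_eq_sum_card_fiberwise (f := fun t => t.1 + t.2.2.2) (t := range (min k₁ k₂))]
  · simp only [card_doubleSimplex_filter_add_eq]
  · rintro ⟨a, b, c, d⟩ h
    simp only [mem_coe, mem_doubleSimplex, mem_range] at h ⊢
    omega

theorem card_doubleSimplex (k₁ k₂ : ℕ) :
    (#(doubleSimplex k₁ k₂) : ℚ) =
      (min k₁ k₂ : ℕ) * ((min k₁ k₂ : ℕ) + 1) * (6 * k₁ * k₂ - 4 * (k₁ + k₂) * ((min k₁ k₂ : ℕ) - 1)
        + ((min k₁ k₂ : ℕ) - 1) * (3 * (min k₁ k₂ : ℕ) - 2)) / 12 := by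
  rw [card_doubleSimplex_eq_sum, Nat.cast_sum, ← sum_range_succ_mul_sub_mul_sub]
  refine sum_congr rfl fun s hs => ?_
  have hs : s < min k₁ k₂ := mem_range.mp hs
  push_cast [Nat.cast_sub (show s ≤ k₁ by omega), Nat.cast_sub (show s ≤ k₂ by omega)]
  ring

theorem card_doubleSimplex_filter_eq_zero (k₁ : ℕ) {k₂ : ℕ} (hk₂ : 0 < k₂) :
    #{t ∈ doubleSimplex k₁ k₂ | t.1 + t.2.1 + t.2.2.2 = 0} = k₁ := by
  conv_rhs => rw [← card_range k₁]
  refine card_nbij' (fun t => t.2.2.1) (fun c => (0, 0, c, 0)) ?_ ?_ ?_ (fun _ _ => rfl)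
  · rintro ⟨a, b, c, d⟩
    simp only [coe_filter, Set.mem_ofPred_eq, mem_doubleSimplex, coe_range, Set.mem_Iio]
    omega
  · intro c
    simp only [coe_range, Set.mem_Iio, coe_filter, Set.mem_ofPred_eq, mem_doubleSimplex, and_true]
    omega
  · rintro ⟨a, b, c, d⟩
    simp only [coe_filter, Set.mem_ofPred_eq, mem_doubleSimplex, Prod.mk.injEq, true_and]
    omega

theorem card_doubleSimplex_filter_lt (k₁ k₂ : ℕ) :
    #{t ∈ doubleSimplex k₁ k₂ | k₁ + k₂ < t.1 + t.2.1 + t.2.2.1 + 2 * t.2.2.2 + 3} =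
      min k₁ k₂ := by
  conv_rhs => rw [← card_range (min k₁ k₂)]
  refine card_nbij' (fun t => t.2.2.2) (fun d => (0, k₂ - 1 - d, k₁ - 1 - d, d)) ?_ ?_ ?_
    (fun _ _ => rfl)
  · rintro ⟨a, b, c, d⟩
    simp only [coe_filter, Set.mem_ofPred_eq, mem_doubleSimplex, coe_range, Set.mem_Iio]
    omega
  · intro d
    simp only [coe_range, Set.mem_Iio, coe_filter, Set.mem_ofPred_eq, mem_doubleSimplex]
    omega
  · rintro ⟨a, b, c, d⟩
    simp only [coe_filter, Set.mem_ofPred_eq, mem_doubleSimplex, Prod.mk.injEq, and_true]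
    omega

theorem Fcount_succ_eq_card_filter (σ : Equiv.Perm (Fin 3)) (M : ℕ) :
    Fcount σ (M + 1) = #{t ∈ doubleSimplex (M + σ 2) (M + 2 - σ 0) |
      ((σ 0 : ℕ) = 0 → t.1 + t.2.1 + t.2.2.2 ≠ 0) ∧
      ((σ 2 : ℕ) = 2 → t.1 + t.2.1 + t.2.2.1 + 2 * t.2.2.2 + 3 ≤ (M + σ 2) + (M + 2 - σ 0))} := by
  rw [Fcount, ← Set.ncard_coe_finset]
  congr 1
  ext ⟨a, b, c, d⟩
  simp only [Set.mem_ofPred_eq, coe_filter, mem_doubleSimplex]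
  have := (σ 0).isLt
  have := (σ 2).isLt
  push_cast
  omega

theorem Fcount_succ (σ : Equiv.Perm (Fin 3)) {p q : ℕ} (hp : (σ 0 : ℕ) = p)
    (hq : (σ 2 : ℕ) = q) (M : ℕ) :
    (Fcount σ (M + 1) : ℚ) = #(doubleSimplex (M + q) (M + 2 - p))
      - ((if p = 0 then M + q else 0 : ℕ) : ℚ)
      - ((if q = 2 then min (M + q) (M + 2 - p) else 0 : ℕ) : ℚ) := by
  subst hp hq
  have hσ0 := (σ 0).isLt
  have h := card_filter_and_add_card_filter_not_add_card_filter_not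
    (doubleSimplex (M + σ 2) (M + 2 - σ 0))
    (fun t => (σ 0 : ℕ) = 0 → t.1 + t.2.1 + t.2.2.2 ≠ 0)
    (fun t => (σ 2 : ℕ) = 2 → t.1 + t.2.1 + t.2.2.1 + 2 * t.2.2.2 + 3 ≤ (M + σ 2) + (M + 2 - σ 0))
    (by rintro ⟨a, b, c, d⟩ ht; rw [mem_doubleSimplex] at ht; dsimp only; omega)
  rw [← Fcount_succ_eq_card_filter] at h
  simp only [Classical.not_imp, not_not, not_le] at h
  have hP : #{t ∈ doubleSimplex (M + σ 2) (M + 2 - σ 0) |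
      (σ 0 : ℕ) = 0 ∧ t.1 + t.2.1 + t.2.2.2 = 0} = if (σ 0 : ℕ) = 0 then M + σ 2 else 0 := by
    split_ifs with h0
    · simp only [h0, true_and]
      exact card_doubleSimplex_filter_eq_zero _ (by omega)
    · simp [h0]
  have hQ : #{t ∈ doubleSimplex (M + σ 2) (M + 2 - σ 0) | (σ 2 : ℕ) = 2 ∧
      M + σ 2 + (M + 2 - σ 0) < t.1 + t.2.1 + t.2.2.1 + 2 * t.2.2.2 + 3} =
      if (σ 2 : ℕ) = 2 then min (M + σ 2) (M + 2 - σ 0) else 0 := by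
    split_ifs with h2
    · simp only [h2, true_and]
      exact card_doubleSimplex_filter_lt _ _
    · simp [h2]
  rw [← hP, ← hQ, ← h]
  push_cast
  ring

/-- The values `|A_σ^N|` for the six permutations `σ ∈ S_3` (written in one-line
notation `123, 132, 213, 231, 312, 321`), for all `N ≥ 1`. -/
theorem counts_A_sigma_N (N : ℕ) (hN : 1 ≤ N) :
    (Fcount 1 N : ℚ) =
        ((N : ℚ) + 1) * ((N : ℚ) + 2) ^ 2 * ((N : ℚ) + 3) / 12 - 2 * ((N : ℚ) + 1) ∧
    (Fcount (Equiv.swap 1 2) N : ℚ) =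
        (N : ℚ) * ((N : ℚ) + 1) * ((N : ℚ) + 2) * ((N : ℚ) + 3) / 12 - (N : ℚ) ∧
    (Fcount (Equiv.swap 0 1) N : ℚ) =
        (N : ℚ) * ((N : ℚ) + 1) * ((N : ℚ) + 2) * ((N : ℚ) + 3) / 12 - (N : ℚ) ∧
    (Fcount (finRotate 3) N : ℚ) =
        ((N : ℚ) - 1) * (N : ℚ) * ((N : ℚ) + 1) * ((N : ℚ) + 2) / 12 ∧
    (Fcount (finRotate 3 * finRotate 3) N : ℚ) =
        ((N : ℚ) - 1) * (N : ℚ) * ((N : ℚ) + 1) * ((N : ℚ) + 2) / 12 ∧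
    (Fcount (Equiv.swap 0 2) N : ℚ) =
        ((N : ℚ) - 1) * (N : ℚ) ^ 2 * ((N : ℚ) + 1) / 12 := by
  obtain ⟨M, rfl⟩ : ∃ M, N = M + 1 := ⟨N - 1, by omega⟩
  rw [Fcount_succ 1 (p := 0) (q := 2) (by decide) (by decide),
    Fcount_succ (Equiv.swap 1 2) (p := 0) (q := 1) (by decide) (by decide),
    Fcount_succ (Equiv.swap 0 1) (p := 1) (q := 2) (by decide) (by decide),
    Fcount_succ (finRotate 3) (p := 1) (q := 0) (by decide) (by decide),
    Fcount_succ (finRotate 3 * finRotate 3) (p := 2) (q := 1) (by decide) (by decide),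
    Fcount_succ (Equiv.swap 0 2) (p := 2) (q := 0) (by decide) (by decide)]
  refine ⟨?_, ?_, ?_, ?_, ?_, ?_⟩ <;> norm_num [card_doubleSimplex] <;> ring
end
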